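/- arXiv:math/0511112 — 2 statements merged into one kernel-verified Lean document; each statement's English description precedes it below -/
import Mathlib

section
/- Let L be a complex symmetric δ×δ matrix. The linear map X ↦ diag(X·L − L·X) from the skew-symmetric matrices so(δ,ℂ) to the hyperplane V = {x ∈ ℂ^δ : ∑ xᵢ = 0} fails to be surjective if and only if there exists a nonzero diagonal matrix Z with trace(Z) = 0 such that L·Z = Z·L. -/
lemma pairing_zero {δ : ℕ} (L Z X : Matrix (Fin δ) (Fin δ) ℂ)
    (hZ : Z.IsDiag) (hc : L * Z = Z * L) :
    ∑ i, Z i i * (X * L - L * X) i i = 0 := by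
  have hdiag : Matrix.diagonal Z.diag = Z := hZ.diagonal_diag
  have h1 : ∑ i, Z i i * (X * L - L * X) i i = (Z * (X * L - L * X)).trace := by
    rw [← hdiag]
    simp [Matrix.trace, Matrix.diagonal_mul, Matrix.diag]
  rw [h1, mul_sub, Matrix.trace_sub, ← mul_assoc, ← mul_assoc,
    Matrix.trace_mul_cycle Z X L, ← hc]
  exact sub_self _

theorem jacobian_surjective_iff_no_commuting_diagonal (δ : ℕ)
    (L : Matrix (Fin δ) (Fin δ) ℂ) (hL : L.transpose = L) :
    (¬ ∀ v : Fin δ → ℂ, (∑ i, v i) = 0 →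
        ∃ X : Matrix (Fin δ) (Fin δ) ℂ, X + X.transpose = 0 ∧
          (fun i => (X * L - L * X) i i) = v) ↔
    ∃ Z : Matrix (Fin δ) (Fin δ) ℂ, Z.IsDiag ∧ Z ≠ 0 ∧ Z.trace = 0 ∧ L * Z = Z * L := by
  constructor
  · -- forward direction, via dual functional
    intro h
    push_neg at h
    obtain ⟨v, hv0, hv⟩ := h
    -- the submodule of achievable vectors
    set p : Submodule ℂ (Fin δ → ℂ) :=
      { carrier := {w | ∃ X : Matrix (Fin δ) (Fin δ) ℂ, X + X.transpose = 0 ∧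
          (fun i => (X * L - L * X) i i) = w}
        add_mem' := by
          rintro w₁ w₂ ⟨X₁, hs₁, rfl⟩ ⟨X₂, hs₂, rfl⟩
          refine ⟨X₁ + X₂, ?_, ?_⟩
          · rw [Matrix.transpose_add]
            rw [show X₁ + X₂ + (X₁.transpose + X₂.transpose)
              = (X₁ + X₁.transpose) + (X₂ + X₂.transpose) by abel, hs₁, hs₂, add_zero]
          · funext i
            simp [add_mul, mul_add, Matrix.add_apply, Matrix.sub_apply]
            ring
        zero_mem' := ⟨0, by simp, by funext i; simp⟩
        smul_mem' := by
          rintro c w ⟨X, hs, rfl⟩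
          refine ⟨c • X, ?_, ?_⟩
          · rw [Matrix.transpose_smul, ← smul_add, hs, smul_zero]
          · funext i
            simp [Matrix.smul_apply, Matrix.sub_apply, mul_smul_comm, smul_mul_assoc]
            ring } with hp
    have hvp : v ∉ p := by
      intro hmem
      obtain ⟨X, hs, hd⟩ := hmem
      exact hv X hs hd
    obtain ⟨f, hfv, hfp⟩ := Submodule.exists_dual_map_eq_bot_of_notMem hvp inferInstance
    have hfzero : ∀ w ∈ p, f w = 0 := by
      intro w hw
      have : f w ∈ p.map f := ⟨w, hw, rfl⟩
      rwa [hfp, Submodule.mem_bot] at this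
    set z : Fin δ → ℂ := fun i => f (Pi.single i 1) with hz
    have hfeq : ∀ w : Fin δ → ℂ, f w = ∑ i, w i * z i := by
      intro w
      conv_lhs => rw [pi_eq_sum_univ w]
      rw [map_sum]
      refine Finset.sum_congr rfl fun i _ => ?_
      rw [map_smul, smul_eq_mul]
      congr 2
      funext j
      simp [Pi.single_apply, eq_comm]
    -- key commuting relation
    have hcomm : ∀ a b : Fin δ, L a b * z a = L a b * z b := by
      intro a b
      by_cases hab : a = b
      · rw [hab]
      set A := Matrix.single a b (1:ℂ) with hA
      set X := A - A.transpose with hX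
      have hskew : X + X.transpose = 0 := by
        rw [hX, Matrix.transpose_sub, Matrix.transpose_transpose]
        abel
      have hmem : (fun i => (X * L - L * X) i i) ∈ p := ⟨X, hskew, rfl⟩
      have h0 := hfzero _ hmem
      rw [hfeq] at h0
      have hXe : ∀ i k, X i k = (if a = i ∧ b = k then (1:ℂ) else 0)
          - (if a = k ∧ b = i then 1 else 0) := by
        intro i k
        simp [hX, hA, Matrix.sub_apply, Matrix.transpose_apply, Matrix.single]
      have hterm : ∀ i, (X * L - L * X) i i
          = ((if i = a then L b i else 0) - (if i = b then L a i else 0))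
            - ((if i = b then L i a else 0) - (if i = a then L i b else 0)) := by
        intro i
        rw [Matrix.sub_apply, Matrix.mul_apply, Matrix.mul_apply]
        simp only [hXe]
        rw [Finset.sum_congr rfl (fun k _ => sub_mul _ _ (L k i)),
            Finset.sum_congr (M := ℂ) rfl (fun k _ => mul_sub (L i k) _ _)]
        rw [Finset.sum_sub_distrib, Finset.sum_sub_distrib]
        congr 1 <;> congr 1 <;>
          simp [ite_and, Finset.sum_ite_eq, Finset.sum_ite_eq', eq_comm]
      rw [Finset.sum_congr rfl (fun i _ => by rw [hterm i])] at h0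
      have hsym : ∀ i j, L i j = L j i := fun i j => by
        nth_rewrite 1 [← hL]
        exact Matrix.transpose_apply L i j
      simp only [sub_mul, ite_mul, zero_mul, Finset.sum_sub_distrib,
        Finset.sum_ite_eq, Finset.sum_ite_eq', Finset.mem_univ, if_true] at h0
      have : L b a * z a - L a b * z b - (L b a * z b - L a b * z a) = 0 := by
        linear_combination h0
      rw [hsym b a] at this
      linear_combination this / 2
    -- z is not constant
    have hnc : ∃ a b : Fin δ, z a ≠ z b := by
      by_contra hcon
      push_neg at hcon
      apply hfv
      rw [hfeq]
      rcases isEmpty_or_nonempty (Fin δ) with hE | hN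
      · simp
      · obtain ⟨i₀⟩ := hN
        calc ∑ i, v i * z i = ∑ i, v i * z i₀ := by
              exact Finset.sum_congr rfl fun i _ => by rw [hcon i i₀]
          _ = (∑ i, v i) * z i₀ := by rw [Finset.sum_mul]
          _ = 0 := by rw [hv0, zero_mul]
    obtain ⟨a, b, hab⟩ := hnc
    have hδ : (δ : ℂ) ≠ 0 := Nat.cast_ne_zero.mpr a.pos.ne'
    set c : ℂ := (∑ i, z i) / δ with hc
    refine ⟨Matrix.diagonal (fun i => z i - c), Matrix.isDiag_diagonal _, ?_, ?_, ?_⟩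
    · intro hZ0
      have ha : z a - c = 0 := by
        have := congrFun (congrFun hZ0 a) a
        simpa using this
      have hb : z b - c = 0 := by
        have := congrFun (congrFun hZ0 b) b
        simpa using this
      exact hab (by linear_combination ha - hb)
    · rw [Matrix.trace_diagonal]
      rw [Finset.sum_sub_distrib]
      simp [hc]
      field_simp
      ring
    · ext i j
      rw [Matrix.mul_diagonal, Matrix.diagonal_mul]
      have := hcomm i j
      ring_nf
      linear_combination -this
  · -- backward direction
    rintro ⟨Z, hdiag, hne, htr, hcomm⟩
    intro hsurj
    set v : Fin δ → ℂ := fun i => star (Z i i) with hv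
    have hv0 : ∑ i, v i = 0 := by
      have : (∑ i, Z i i) = 0 := htr
      calc ∑ i, v i = star (∑ i, Z i i) := by rw [star_sum]
        _ = 0 := by rw [this, star_zero]
    obtain ⟨X, hskew, hd⟩ := hsurj v hv0
    have h0 : ∑ i, Z i i * (X * L - L * X) i i = 0 := pairing_zero L Z X hdiag hcomm
    have h1 : ∑ i, Z i i * v i = 0 := by
      rw [← h0]
      exact Finset.sum_congr rfl fun i _ => by rw [← congrFun hd i]
    have hZ0 : ∀ i, Z i i = 0 := by
      have h2 : ∑ i, (Complex.normSq (Z i i) : ℂ) = 0 := by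
        rw [← h1]
        exact Finset.sum_congr rfl fun i _ => (Complex.mul_conj (Z i i)).symm
      have h3 : ∑ i, Complex.normSq (Z i i) = 0 := by
        exact_mod_cast h2
      intro i
      have := (Finset.sum_eq_zero_iff_of_nonneg
        (fun j _ => Complex.normSq_nonneg (Z j j))).mp h3 i (Finset.mem_univ i)
      exact Complex.normSq_eq_zero.mp this
    apply hne
    ext i j
    by_cases hij : i = j
    · subst hij; simpa using hZ0 i
    · simpa using hdiag hij
end

section
/- Let G(s) = diag(1/s, 1/s², …, 1/sⁿ). Then the pair D(s) = diag(s, s², …, sⁿ), N(s) = I_n satisfies D(s)⁻¹N(s) = G(s), and for every pair of n×n complex matrices F₁, F₂ with F₁·F₂ᵀ = F₂·F₁ᵀ and [F₁ F₂] of rank n, the polynomial det [[D(s), N(s)],[F₁, F₂]] is not identically zero. -/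
/-!
If the determinant vanished, a nonzero polynomial vector `a` would satisfy `F₁ a = F₂ (D a)`.
Coefficientwise, every pair `(u_k, w_k)` of `k`-th coefficients of `(D a, a)` solves
`F₁ w = F₂ u`; for a Lagrangian pair these solutions form the row space of `[F₁ F₂]`, a Lagrangian
subspace, so `u_k ⬝ w_l = w_k ⬝ u_l` for all `k, l`. Since the exponents of `D = diag(s, …, sⁿ)` are
positive and distinct, comparing top-degree coefficients shows that this symmetry forces `a = 0`.
-/

open Matrix Polynomial

theorem Matrix.rank_fromCols_swap_neg {m ι R : Type*} [Fintype m] [Fintype ι] [DecidableEq ι]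
    [CommRing R] (F₁ F₂ : Matrix m ι R) :
    (fromCols F₂ (-F₁)).rank = (fromCols F₁ F₂).rank := by
  have hJ : fromCols F₁ F₂ * (fromBlocks 0 (-1) 1 0 : Matrix (ι ⊕ ι) (ι ⊕ ι) R) =
      fromCols F₂ (-F₁) := by
    rw [fromCols_mul_fromBlocks]
    simp
  have hJJ : (fromBlocks 0 (-1) 1 0 * fromBlocks 0 1 (-1) 0 : Matrix (ι ⊕ ι) (ι ⊕ ι) R) = 1 := by
    simp [fromBlocks_multiply, fromBlocks_one]
  rw [← hJ, rank_mul_eq_left_of_isUnit_det _ _ (isUnit_det_of_right_inverse hJJ)]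

theorem Matrix.exists_mulVec_eq_of_det_fromBlocks_one₁₂_eq_zero {ι R : Type*} [Fintype ι]
    [DecidableEq ι] [CommRing R] [IsDomain R] {A C D : Matrix ι ι R}
    (h : (fromBlocks A 1 C D).det = 0) : ∃ x ≠ 0, C *ᵥ x = D *ᵥ (A *ᵥ x) := by
  obtain ⟨v, hv0, hv⟩ := exists_mulVec_eq_zero_iff.mpr h
  obtain ⟨x, y, rfl⟩ : ∃ x y, v = Sum.elim x y := ⟨_, _, (Sum.elim_comp_inl_inr v).symm⟩
  simp only [fromBlocks_mulVec, Sum.elim_comp_inl, Sum.elim_comp_inr, one_mulVec] at hv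
  rw [← Sum.elim_zero_zero, Sum.elim_eq_iff, add_eq_zero_iff_eq_neg', add_eq_zero_iff_eq_neg']
    at hv
  obtain ⟨rfl, hCD⟩ := hv
  refine ⟨x, fun hx0 => hv0 ?_, ?_⟩
  · simp [hx0]
  · rw [mulVec_neg, neg_inj] at hCD
    exact hCD.symm

theorem Polynomial.coeff_map_C_mulVec {m n R : Type*} [Fintype n] [CommSemiring R]
    (F : Matrix m n R) (v : n → R[X]) (k : ℕ) (i : m) :
    ((F.map C *ᵥ v) i).coeff k = (F *ᵥ fun j => (v j).coeff k) i := by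
  simp [mulVec, dotProduct, finsetSum_coeff]

/- With `D` the largest degree among the `X ^ e i * a i`, taking `k = D` kills the right-hand
side and leaves `∑ cᵢ • a i = 0`, whose nonzero terms have the pairwise distinct degrees
`D - e i`. -/
theorem Polynomial.eq_zero_of_sum_coeff_mul_X_pow_symm {ι R : Type*} [Fintype ι] [CommRing R]
    [IsDomain R] {e : ι → ℕ} (he : Function.Injective e) (hpos : ∀ i, 0 < e i) {a : ι → R[X]}
    (h : ∀ k l, ∑ i, (X ^ e i * a i).coeff k * (a i).coeff l =
      ∑ i, (a i).coeff k * (X ^ e i * a i).coeff l) : a = 0 := by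
  classical
  by_contra ha
  obtain ⟨j, hj, hmax⟩ := Finset.exists_max_image {i | a i ≠ 0}
    (fun i => (X ^ e i * a i).natDegree) (by simpa [Finset.Nonempty, funext_iff] using ha)
  replace hj : a j ≠ 0 := by simpa using hj
  set D := (X ^ e j * a j).natDegree
  have hdeg : ∀ i, a i ≠ 0 → (a i).natDegree + e i ≤ D := fun i hi => by
    simpa [hi] using hmax i (by simpa using hi)
  set f : ι → R[X] := fun i => C ((X ^ e i * a i).coeff D) * a i
  have hf : ∑ i, f i = 0 := by
    ext l
    have hcoeff : ∀ i, (a i).coeff D = 0 := fun i => by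
      by_cases hi : a i = 0
      · simp [hi]
      · exact coeff_eq_zero_of_natDegree_lt (by have := hdeg i hi; have := hpos i; omega)
    simpa [f, finsetSum_coeff, coeff_C_mul, hcoeff] using h D l
  have hfdeg : ∀ i, f i ≠ 0 → (f i).natDegree + e i = D := fun i hfi => by
    obtain ⟨hc, hi⟩ := mul_ne_zero_iff.mp hfi
    have hc : (X ^ e i * a i).coeff D ≠ 0 := by simpa using hc
    have := le_natDegree_of_ne_zero hc
    rw [natDegree_X_pow_mul _ hi] at this
    rw [natDegree_C_mul (by simpa using hc)]
    exact le_antisymm (hdeg i hi) this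
  have hlead : (X ^ e j * a j).coeff D ≠ 0 :=
    leadingCoeff_ne_zero.mpr (mul_ne_zero (pow_ne_zero _ X_ne_zero) hj)
  have hfj : f j ≠ 0 := mul_ne_zero (C_ne_zero.mpr hlead) hj
  have hsup := degree_sum_eq_of_disjoint f Finset.univ fun i hi i' hi' hne heq => hne <| he <| by
    have := natDegree_eq_of_degree_eq heq
    have := hfdeg i hi.2
    have := hfdeg i' hi'.2
    omega
  have hj_le := Finset.le_sup (f := fun i => degree (f i)) (Finset.mem_univ j)
  rw [← hsup, hf, degree_zero, le_bot_iff, degree_eq_bot] at hj_le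
  exact hfj hj_le

structure Matrix.IsLagrangianPair {ι K : Type*} [Fintype ι] [Field K]
    (F₁ F₂ : Matrix ι ι K) : Prop where
  mul_transpose_comm : F₁ * F₂ᵀ = F₂ * F₁ᵀ
  rank_fromCols : (fromCols F₁ F₂).rank = Fintype.card ι

namespace Matrix.IsLagrangianPair

variable {ι K : Type*} [Fintype ι] [DecidableEq ι] [Field K] {F₁ F₂ : Matrix ι ι K}

/- The row space of `[F₁ F₂]` lies in the solution space by `F₁ F₂ᵀ = F₂ F₁ᵀ`, and both have
dimension `card ι`. -/
theorem exists_vecMul_eq (hF : IsLagrangianPair F₁ F₂) {u w : ι → K}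
    (h : F₁ *ᵥ w = F₂ *ᵥ u) : ∃ c, c ᵥ* F₁ = u ∧ c ᵥ* F₂ = w := by
  set G := fromCols F₁ F₂
  set A := fromCols F₂ (-F₁)
  have hAG : A * Gᵀ = 0 := by
    simp [A, G, transpose_fromCols, fromCols_mul_fromRows, hF.mul_transpose_comm]
  have hle : LinearMap.range G.vecMulLinear ≤ LinearMap.ker A.mulVecLin := by
    rintro _ ⟨c, rfl⟩
    simp [← mulVec_transpose, mulVec_mulVec, hAG]
  have hrange : Module.finrank K (LinearMap.range G.vecMulLinear) = Fintype.card ι := by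
    rw [← mulVecLin_transpose]
    exact (rank_transpose G).trans hF.rank_fromCols
  have hker : Module.finrank K (LinearMap.ker A.mulVecLin) = Fintype.card ι := by
    have := A.mulVecLin.finrank_range_add_finrank_ker
    have hA : A.rank = Fintype.card ι := (rank_fromCols_swap_neg F₁ F₂).trans hF.rank_fromCols
    simp only [Module.finrank_fintype_fun_eq_card, Fintype.card_sum] at this
    rw [rank] at hA
    omega
  obtain ⟨c, hc⟩ : Sum.elim u w ∈ LinearMap.range G.vecMulLinear := by
    rw [Submodule.eq_of_le_of_finrank_eq hle (hrange.trans hker.symm)]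
    simp [A, neg_mulVec, h]
  exact ⟨c, by simpa [G, vecMul_fromCols, Sum.elim_eq_iff] using hc⟩

theorem dotProduct_eq (hF : IsLagrangianPair F₁ F₂) {u w u' w' : ι → K}
    (h : F₁ *ᵥ w = F₂ *ᵥ u) (h' : F₁ *ᵥ w' = F₂ *ᵥ u') : u ⬝ᵥ w' = w ⬝ᵥ u' := by
  obtain ⟨c, rfl, rfl⟩ := hF.exists_vecMul_eq h
  obtain ⟨c', rfl, rfl⟩ := hF.exists_vecMul_eq h'
  rw [← mulVec_transpose F₂ c', ← mulVec_transpose F₁ c', dotProduct_mulVec, dotProduct_mulVec,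
    vecMul_vecMul, vecMul_vecMul, hF.mul_transpose_comm]

theorem eq_zero_of_map_mulVec_eq (hF : IsLagrangianPair F₁ F₂) {e : ι → ℕ}
    (he : Function.Injective e) (hpos : ∀ i, 0 < e i) {a : ι → K[X]}
    (h : F₁.map C *ᵥ a = F₂.map C *ᵥ fun i => X ^ e i * a i) : a = 0 := by
  have hcoeff (k : ℕ) :
      F₁ *ᵥ (fun i => (a i).coeff k) = F₂ *ᵥ fun i => (X ^ e i * a i).coeff k := funext fun j => by
    simpa only [coeff_map_C_mulVec] using congrArg (coeff · k) (congrFun h j)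
  exact eq_zero_of_sum_coeff_mul_X_pow_symm he hpos fun k l =>
    hF.dotProduct_eq (hcoeff k) (hcoeff l)

end Matrix.IsLagrangianPair

open Polynomial in
theorem diagonal_system_nondegenerate_general (n : ℕ) :
    (Matrix.diagonal (fun i : Fin n => (RatFunc.X : RatFunc ℂ) ^ ((i : ℕ) + 1)))⁻¹ * 1 =
        Matrix.diagonal (fun i : Fin n => ((RatFunc.X : RatFunc ℂ) ^ ((i : ℕ) + 1))⁻¹) ∧
    ∀ F₁ F₂ : Matrix (Fin n) (Fin n) ℂ,
      F₁ * F₂.transpose = F₂ * F₁.transpose →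
      (Matrix.fromCols F₁ F₂).rank = n →
      Matrix.det (Matrix.fromBlocks
          (Matrix.diagonal (fun i : Fin n => (X : Polynomial ℂ) ^ ((i : ℕ) + 1)))
          (1 : Matrix (Fin n) (Fin n) (Polynomial ℂ))
          (F₁.map C) (F₂.map C)) ≠ 0 := by
  constructor
  · rw [mul_one]
    exact inv_eq_right_inv (by simp [RatFunc.X_ne_zero])
  · intro F₁ F₂ hsym hrank hdet
    have hF : IsLagrangianPair F₁ F₂ := ⟨hsym, by rw [hrank, Fintype.card_fin]⟩
    obtain ⟨x, hx0, hx⟩ := exists_mulVec_eq_of_det_fromBlocks_one₁₂_eq_zero hdet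
    refine hx0 (hF.eq_zero_of_map_mulVec_eq (e := fun i => (i : ℕ) + 1)
      (fun i i' h => Fin.ext (by simpa using h)) (fun _ => Nat.succ_pos _) ?_)
    exact hx.trans (congrArg _ (funext fun i => mulVec_diagonal _ _ i))

open Polynomial in
theorem diagonal_system_nondegenerate (n : ℕ) (hn : 1 ≤ n) :
    (Matrix.diagonal (fun i : Fin n => (RatFunc.X : RatFunc ℂ) ^ ((i : ℕ) + 1)))⁻¹ * 1 =
        Matrix.diagonal (fun i : Fin n => ((RatFunc.X : RatFunc ℂ) ^ ((i : ℕ) + 1))⁻¹) ∧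
    ∀ F₁ F₂ : Matrix (Fin n) (Fin n) ℂ,
      F₁ * F₂.transpose = F₂ * F₁.transpose →
      (Matrix.fromCols F₁ F₂).rank = n →
      Matrix.det (Matrix.fromBlocks
          (Matrix.diagonal (fun i : Fin n => (X : Polynomial ℂ) ^ ((i : ℕ) + 1)))
          (1 : Matrix (Fin n) (Fin n) (Polynomial ℂ))
          (F₁.map C) (F₂.map C)) ≠ 0 :=
  diagonal_system_nondegenerate_general n
end
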